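/- arXiv:2204.09732 — 3 statements merged into one kernel-verified Lean document; each statement's English description precedes it below -/
import Mathlib

section
/- Let Y be a metric space and let V₁, …, V_N and W be subsets of Y, with f_ℓ : V_ℓ → ℝ functions and g : W → ℝ ≡ 1 the constant function 1. Suppose Λ ≥ 0, b > 0, and: (i) each f_ℓ is c_ℓ-Lipschitz with c_ℓ ≤ Λ and takes values in [0,1]; (ii) there is a Λ-Lipschitz function f defined on a set containing compact sets A_ℓ ⊆ V_ℓ and W, with f_ℓ = f on A_ℓ and f = 1 on W, such that every point of V_ℓ is within distance b/10 of A_ℓ; (iii) the pairwise distances between distinct A_ℓ are at least 8b/10 + 2·(b/10), and d(V_ℓ, W) ≥ 9b/10 for each ℓ. Then the function ĥ on (⋃_ℓ V_ℓ) ∪ W defined by ĥ = f_ℓ on V_ℓ and ĥ = 1 on W is 3Λ-Lipschitz. -/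
/-!
The glued function `h` agrees with `f` on `T = (⋃ ℓ, A ℓ) ∪ W`, so it is `Λ`-Lipschitz on `T`
as well as on each piece `V ℓ` and `W`. Every point `p` of a piece has an anchor `a ∈ T` in the
same piece within distance `r = b / 10` (points of `W` are their own anchors). Going from `p` to
`q` through their anchors costs `Λ * (dist p q + 4 r)`, which is at most `3 * Λ * dist p q` once
points of different pieces are `2 r` apart; the separation of the `A ℓ` from each other and of
the `V ℓ` from `W` provides exactly that.
-/

open Set

protected theorem LipschitzOnWith.congr {α β : Type*} [PseudoEMetricSpace α]
    [PseudoEMetricSpace β] {K : NNReal} {s : Set α} {f g : α → β}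
    (hf : LipschitzOnWith K f s) (hfg : EqOn f g s) : LipschitzOnWith K g s := by
  intro x hx y hy
  rw [← hfg hx, ← hfg hy]
  exact hf hx hy

section

variable {Y : Type*} [PseudoMetricSpace Y]

theorem dist_le_of_anchors {h : Y → ℝ} {K : NNReal} {s t T : Set Y}
    (hs : LipschitzOnWith K h s) (ht : LipschitzOnWith K h t) (hT : LipschitzOnWith K h T)
    {p q a a' : Y} (hp : p ∈ s) (hq : q ∈ t) (ha : a ∈ s ∩ T) (ha' : a' ∈ t ∩ T) :
    dist (h p) (h q) ≤ K * (dist p q + 2 * dist p a + 2 * dist q a') := by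
  have hpa := lipschitzOnWith_iff_dist_le_mul.mp hs p hp a ha.1
  have haa' := lipschitzOnWith_iff_dist_le_mul.mp hT a ha.2 a' ha'.2
  have hqa := lipschitzOnWith_iff_dist_le_mul.mp ht q hq a' ha'.1
  have hdist : dist a a' ≤ dist p a + dist p q + dist q a' := by
    simpa only [dist_comm a p] using dist_triangle4 a p q a'
  calc dist (h p) (h q) ≤ dist (h p) (h a) + dist (h a) (h a') + dist (h q) (h a') := by
        simpa only [dist_comm (h a') (h q)] using dist_triangle4 (h p) (h a) (h a') (h q)
    _ ≤ K * dist p a + K * (dist p a + dist p q + dist q a') + K * dist q a' :=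
        add_le_add_three hpa (haa'.trans (by gcongr)) hqa
    _ = K * (dist p q + 2 * dist p a + 2 * dist q a') := by ring

theorem lipschitzOnWith_three_mul_iUnion_of_anchored {ι : Type*} {P : ι → Set Y} {T : Set Y}
    {h : Y → ℝ} {K : NNReal} {r : ℝ}
    (hP : ∀ i, LipschitzOnWith K h (P i)) (hT : LipschitzOnWith K h T)
    (hanchor : ∀ i, ∀ p ∈ P i, ∃ a ∈ P i ∩ T, dist p a ≤ r)
    (hsep : ∀ i j, i ≠ j → ∀ p ∈ P i, ∀ q ∈ P j, 2 * r ≤ dist p q) :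
    LipschitzOnWith (3 * K) h (⋃ i, P i) := by
  rw [lipschitzOnWith_iff_dist_le_mul]
  rintro p hp q hq
  obtain ⟨i, hpi⟩ := mem_iUnion.mp hp
  obtain ⟨j, hqj⟩ := mem_iUnion.mp hq
  push_cast
  by_cases hij : i = j
  · subst hij
    calc dist (h p) (h q) ≤ K * dist p q := lipschitzOnWith_iff_dist_le_mul.mp (hP i) p hpi q hqj
      _ ≤ 3 * K * dist p q := by gcongr; linarith [K.coe_nonneg]
  · obtain ⟨a, ha, hpa⟩ := hanchor i p hpi
    obtain ⟨a', ha', hqa'⟩ := hanchor j q hqj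
    have hpq := hsep i j hij p hpi q hqj
    calc dist (h p) (h q) ≤ K * (dist p q + 2 * dist p a + 2 * dist q a') :=
          dist_le_of_anchors (hP i) (hP j) hT hpi hqj ha ha'
      _ ≤ K * (3 * dist p q) := by gcongr; linarith
      _ = 3 * K * dist p q := by ring

theorem sub_two_mul_le_dist_of_near {x y a a' : Y} {D r : ℝ} (hD : D ≤ dist a a')
    (hxa : dist x a ≤ r) (hya : dist y a' ≤ r) : D - 2 * r ≤ dist x y := by
  have := dist_triangle4 a x y a'
  rw [dist_comm a x] at this
  linarith

end

theorem glued_function_lipschitz_general {Y : Type*} [MetricSpace Y]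
    (N : ℕ) (V A : Fin N → Set Y) (W : Set Y)
    (fl : Fin N → Y → ℝ) (f : Y → ℝ) (Λ : NNReal) (c : Fin N → NNReal) (b : ℝ)
    (hb : 0 < b)
    (hc : ∀ ℓ, c ℓ ≤ Λ)
    (hfl_lip : ∀ ℓ, LipschitzOnWith (c ℓ) (fl ℓ) (V ℓ))
    (hf_lip : LipschitzOnWith Λ f ((⋃ ℓ, A ℓ) ∪ W))
    (hAV : ∀ ℓ, A ℓ ⊆ V ℓ)
    (hfl_eq : ∀ ℓ, EqOn (fl ℓ) f (A ℓ))
    (hfW : ∀ w ∈ W, f w = 1)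
    (hnear : ∀ ℓ, ∀ x ∈ V ℓ, ∃ a ∈ A ℓ, dist x a ≤ b / 10)
    (hsep : ∀ ℓ ℓ', ℓ ≠ ℓ' → ∀ x ∈ A ℓ, ∀ y ∈ A ℓ',
      8 * b / 10 + 2 * (b / 10) ≤ dist x y)
    (hVW : ∀ ℓ, ∀ x ∈ V ℓ, ∀ w ∈ W, 9 * b / 10 ≤ dist x w)
    (h : Y → ℝ)
    (hhV : ∀ ℓ, ∀ x ∈ V ℓ, h x = fl ℓ x)
    (hhW : ∀ w ∈ W, h w = 1) :
    LipschitzOnWith (3 * Λ) h ((⋃ ℓ, V ℓ) ∪ W) := by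
  let P : Option (Fin N) → Set Y := fun o => o.elim W V
  have hunion : (⋃ o, P o) = (⋃ ℓ, V ℓ) ∪ W := by rw [iUnion_option, union_comm]; rfl
  have hfh : EqOn f h ((⋃ ℓ, A ℓ) ∪ W) := by
    rintro x (hx | hx)
    · obtain ⟨ℓ, hxA⟩ := mem_iUnion.mp hx
      rw [hhV ℓ x (hAV ℓ hxA), hfl_eq ℓ hxA]
    · rw [hhW x hx, hfW x hx]
  rw [← hunion]
  refine lipschitzOnWith_three_mul_iUnion_of_anchored (r := b / 10) ?_ (hf_lip.congr hfh) ?_ ?_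
  · rintro (_ | ℓ)
    · exact (LipschitzWith.const' 1).lipschitzOnWith.congr fun w hw => (hhW w hw).symm
    · exact ((hfl_lip ℓ).weaken (hc ℓ)).congr fun x hx => (hhV ℓ x hx).symm
  · rintro (_ | ℓ) x hx
    · exact ⟨x, ⟨hx, Or.inr hx⟩, by rw [dist_self]; positivity⟩
    · obtain ⟨a, ha, hxa⟩ := hnear ℓ x hx
      exact ⟨a, ⟨hAV ℓ ha, Or.inl (mem_iUnion.mpr ⟨ℓ, ha⟩)⟩, hxa⟩
  · rintro (_ | ℓ) (_ | ℓ') hne x hx y hy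
    · exact absurd rfl hne
    · linarith [hVW ℓ' y hy x hx, dist_comm x y]
    · linarith [hVW ℓ x hx y hy]
    · obtain ⟨a, ha, hxa⟩ := hnear ℓ x hx
      obtain ⟨a', ha', hya'⟩ := hnear ℓ' y hy
      have := sub_two_mul_le_dist_of_near (hsep ℓ ℓ' (mt (congrArg some) hne) a ha a' ha') hxa hya'
      linarith

theorem glued_function_lipschitz {Y : Type*} [MetricSpace Y]
    (N : ℕ) (V A : Fin N → Set Y) (W : Set Y)
    (fl : Fin N → Y → ℝ) (f : Y → ℝ) (Λ : NNReal) (c : Fin N → NNReal) (b : ℝ)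
    (hb : 0 < b)
    (hc : ∀ ℓ, c ℓ ≤ Λ)
    (hfl_lip : ∀ ℓ, LipschitzOnWith (c ℓ) (fl ℓ) (V ℓ))
    (hfl_range : ∀ ℓ, ∀ x ∈ V ℓ, fl ℓ x ∈ Icc (0 : ℝ) 1)
    (hf_lip : LipschitzOnWith Λ f ((⋃ ℓ, A ℓ) ∪ W))
    (hAV : ∀ ℓ, A ℓ ⊆ V ℓ) (hAcpt : ∀ ℓ, IsCompact (A ℓ))
    (hfl_eq : ∀ ℓ, EqOn (fl ℓ) f (A ℓ))
    (hfW : ∀ w ∈ W, f w = 1)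
    (hnear : ∀ ℓ, ∀ x ∈ V ℓ, ∃ a ∈ A ℓ, dist x a ≤ b / 10)
    (hsep : ∀ ℓ ℓ', ℓ ≠ ℓ' → ∀ x ∈ A ℓ, ∀ y ∈ A ℓ',
      8 * b / 10 + 2 * (b / 10) ≤ dist x y)
    (hVW : ∀ ℓ, ∀ x ∈ V ℓ, ∀ w ∈ W, 9 * b / 10 ≤ dist x w)
    (h : Y → ℝ)
    (hhV : ∀ ℓ, ∀ x ∈ V ℓ, h x = fl ℓ x)
    (hhW : ∀ w ∈ W, h w = 1) :
    LipschitzOnWith (3 * Λ) h ((⋃ ℓ, V ℓ) ∪ W) :=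
  glued_function_lipschitz_general N V A W fl f Λ c b hb hc hfl_lip hf_lip hAV hfl_eq hfW hnear hsep
    hVW h hhV hhW
end

section
/- Let Y be a metric space, S ⊆ Y, K ⊆ S a nonempty compact set, and u : S → ℝ a 1-Lipschitz function with u ≤ 0 exactly on K and u(x) = dist(x, K) for x ∈ S \ K. Let U(y) = inf_{s ∈ S}(u(s) + d(s, y)) be the 1-Lipschitz extension of u to Y, fix z₀ ∈ Y, and let L = − inf_K u ≥ 0 (which is finite by compactness) and D = diam(K ∪ {z₀}). Then for every α ≥ 0, the sublevel set U^{−1}((−∞, α]) is bounded: every point p with U(p) ≤ α satisfies d(p, z₀) ≤ 2α + L + D. -/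
/-! Every `s ∈ S` satisfies `u s ≥ infDist s K - L`: on `K` this is the definition of `L`, and
off `K` it is `u = infDist · K` together with `L ≥ 0`. Since `infDist s K` is within `D` of the
distance from `s` to `z₀`, the triangle inequality gives `u s + d(s, p) ≥ d(p, z₀) - L - D` for
all `s`, so `U p ≤ α` forces `d(p, z₀) ≤ α + L + D`. -/

open Metric Set

namespace Metric

variable {Y : Type*} [MetricSpace Y]

lemma dist_le_dist_add_infDist_add_diam {K : Set Y} (hK : Bornology.IsBounded K)
    (hKne : K.Nonempty) (x p z : Y) :
    dist p z ≤ dist x p + infDist x K + diam (K ∪ {z}) := by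
  have hbdd : Bornology.IsBounded (K ∪ {z}) := hK.union Bornology.isBounded_singleton
  suffices dist p z - dist x p - diam (K ∪ {z}) ≤ infDist x K by linarith
  refine (le_infDist hKne).2 fun k hk => ?_
  have hkz : dist k z ≤ diam (K ∪ {z}) := dist_le_diam_of_mem hbdd (Or.inl hk) (Or.inr rfl)
  have hpz : dist p z ≤ dist x p + dist x k + dist k z := by
    calc dist p z ≤ dist p x + dist x z := dist_triangle p x z
      _ ≤ dist p x + (dist x k + dist k z) := by gcongr; exact dist_triangle x k z
      _ = dist x p + dist x k + dist k z := by rw [dist_comm p x]; ring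
  linarith

end Metric

lemma sInf_image_nonpos {α : Type*} {K : Set α} {u : α → ℝ} (hKne : K.Nonempty)
    (hbdd : BddBelow (u '' K)) (hu_K : ∀ x ∈ K, u x ≤ 0) : sInf (u '' K) ≤ 0 := by
  obtain ⟨k, hk⟩ := hKne
  exact (csInf_le hbdd (mem_image_of_mem u hk)).trans (hu_K k hk)

lemma infDist_add_sInf_image_le {Y : Type*} [MetricSpace Y] {S K : Set Y} {u : Y → ℝ}
    (hKne : K.Nonempty) (hbdd : BddBelow (u '' K)) (hu_K : ∀ x ∈ K, u x ≤ 0)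
    (hu_dist : ∀ x ∈ S \ K, u x = infDist x K) {s : Y} (hs : s ∈ S) :
    infDist s K + sInf (u '' K) ≤ u s := by
  by_cases hsK : s ∈ K
  · rw [infDist_zero_of_mem hsK, zero_add]
    exact csInf_le hbdd (mem_image_of_mem u hsK)
  · rw [hu_dist s ⟨hs, hsK⟩]
    linarith [sInf_image_nonpos hKne hbdd hu_K]

theorem sublevel_of_extension_bounded {Y : Type*} [MetricSpace Y]
    (S K : Set Y) (hKS : K ⊆ S) (hKne : K.Nonempty) (hKcpt : IsCompact K)
    (u : Y → ℝ) (hu_lip : LipschitzOnWith 1 u S)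
    (hu_K : ∀ x ∈ S, (u x ≤ 0 ↔ x ∈ K))
    (hu_dist : ∀ x ∈ S \ K, u x = infDist x K)
    (z₀ : Y) :
    ∀ α : ℝ, 0 ≤ α → ∀ p : Y,
      (⨅ s : S, (u s + dist (s : Y) p)) ≤ α →
      dist p z₀ ≤ 2 * α + (-(sInf (u '' K))) + Metric.diam (K ∪ {z₀}) := by
  intro α hα p hp
  have hbdd : BddBelow (u '' K) :=
    (hKcpt.image_of_continuousOn (hu_lip.continuousOn.mono hKS)).bddBelow
  have hu_nonpos : ∀ x ∈ K, u x ≤ 0 := fun x hx => (hu_K x (hKS hx)).2 hx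
  have : Nonempty S := (hKne.mono hKS).to_subtype
  have hlower : dist p z₀ + sInf (u '' K) - diam (K ∪ {z₀}) ≤ ⨅ s : S, (u s + dist (s : Y) p) :=
    le_ciInf fun s => by
      linarith [dist_le_dist_add_infDist_add_diam hKcpt.isBounded hKne (s : Y) p z₀,
        infDist_add_sInf_image_le hKne hbdd hu_nonpos hu_dist s.2]
  linarith
end

section
/- Let Y be a metric space, S ⊆ Y, and K ⊆ S nonempty compact with defining function u : S → ℝ (1-Lipschitz, {u ≤ 0} = K, u = dist(·, K) off K). Let U : Y → ℝ be the standard 1-Lipschitz extension of u, and suppose γ > 0 is such that u^{−1}((−∞, 3γ]) ⊆ O for a subset O ⊆ S. Let f : S → ℝ be Λ-Lipschitz with 0 ≤ f ≤ 1 and f ≡ 1 on O. Then the extension of f to S ∪ U^{−1}((−∞, γ]) defined to be 1 on U^{−1}((−∞, γ]) \ S is 2Λ-Lipschitz. -/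
/-!
Off `S` the extension is the constant `1`, so only pairs `p ∉ S`, `q ∈ S` with `U p ≤ γ` need
care. If `u q ≤ 3γ` then `q ∈ O` and `f q = 1`. Otherwise the 1-Lipschitz bound
`u q ≤ U p + d(p, q) ≤ γ + d(p, q)` forces `d(p, q) > 2γ`, hence `u q ≤ 2 d(p, q)`; and since
`f = 1` on `K ⊆ O`, comparing `f q` with `f` at a point of `K` nearest to `q` gives
`|1 - f q| ≤ Λ dist(q, K) = Λ u q ≤ 2Λ d(p, q)`.
-/

open Metric Set NNReal

section

variable {X Z : Type*} [PseudoMetricSpace X] [PseudoMetricSpace Z]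

theorem LipschitzOnWith.sub_dist_le_iInf_add_dist {S : Set X} {u : X → ℝ}
    (hu : LipschitzOnWith 1 u S) {q : X} (hq : q ∈ S) (p : X) :
    u q - dist p q ≤ ⨅ s : S, (u s + dist (s : X) p) := by
  have : Nonempty S := ⟨⟨q, hq⟩⟩
  refine le_ciInf fun s => ?_
  have hus : u q ≤ u s + dist q s := by simpa using hu.le_add_mul hq s.2
  linarith [dist_triangle q p s, dist_comm p q, dist_comm (s : X) p]

theorem LipschitzOnWith.dist_le_mul_infDist {S K : Set X} {f : X → Z} {Λ : ℝ≥0} {c : Z}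
    (hf : LipschitzOnWith Λ f S) (hKS : K ⊆ S) (hKne : K.Nonempty) (hK : IsCompact K)
    (hfK : ∀ k ∈ K, f k = c) {q : X} (hq : q ∈ S) :
    dist c (f q) ≤ Λ * infDist q K := by
  obtain ⟨k, hk, hqk⟩ := hK.exists_infDist_eq_dist hKne q
  rw [hqk, ← hfK k hk, dist_comm q]
  exact hf.dist_le_mul k (hKS hk) q hq

theorem LipschitzOnWith.union_of_eqOn_const {A B : Set X}
    {g : X → Z} {c : Z} {Λ : ℝ≥0} (hA : LipschitzOnWith Λ g A) (hB : ∀ p ∈ B, g p = c)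
    (hAB : ∀ p ∈ B, ∀ q ∈ A, dist c (g q) ≤ Λ * dist p q) :
    LipschitzOnWith Λ g (A ∪ B) := by
  refine LipschitzOnWith.of_dist_le_mul ?_
  rintro x (hxA | hxB) y (hyA | hyB)
  · exact hA.dist_le_mul x hxA y hyA
  · rw [hB y hyB, dist_comm, dist_comm x]
    exact hAB y hyB x hxA
  · rw [hB x hxB]
    exact hAB x hxB y hyA
  · rw [hB x hxB, hB y hyB, dist_self]
    positivity

end

theorem extension_by_one_lipschitz_general {Y : Type*} [MetricSpace Y]
    (S K O : Set Y) (hKS : K ⊆ S) (hKne : K.Nonempty) (hKcpt : IsCompact K)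
    (u : Y → ℝ) (hu_lip : LipschitzOnWith 1 u S)
    (hu_K : ∀ x ∈ S, (u x ≤ 0 ↔ x ∈ K))
    (hu_dist : ∀ x ∈ S \ K, u x = infDist x K)
    (U : Y → ℝ) (hU : ∀ y, U y = ⨅ s : S, (u s + dist (s : Y) y))
    (γ : ℝ) (hγ : 0 < γ)
    (hsub : {x ∈ S | u x ≤ 3 * γ} ⊆ O)
    (Λ : NNReal) (f : Y → ℝ) (hf_lip : LipschitzOnWith Λ f S)
    (hf_O : ∀ x ∈ O, f x = 1)
    (g : Y → ℝ)
    (hg_S : ∀ x ∈ S, g x = f x)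
    (hg_one : ∀ y, U y ≤ γ → y ∉ S → g y = 1) :
    LipschitzOnWith (2 * Λ) g (S ∪ {y | U y ≤ γ}) := by
  have hfK : ∀ k ∈ K, f k = 1 := fun k hk =>
    hf_O k (hsub ⟨hKS hk, by linarith [(hu_K k (hKS hk)).2 hk]⟩)
  have hcross : ∀ p, U p ≤ γ → ∀ q ∈ S, dist 1 (f q) ≤ 2 * Λ * dist p q := by
    intro p hUp q hq
    by_cases hq3 : u q ≤ 3 * γ
    · rw [hf_O q (hsub ⟨hq, hq3⟩), dist_self]
      positivity
    have huq : u q - dist p q ≤ U p := hU p ▸ hu_lip.sub_dist_le_iInf_add_dist hq p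
    have hqK : q ∉ K := fun hqK => by linarith [(hu_K q hq).2 hqK]
    calc dist 1 (f q) ≤ Λ * infDist q K := hf_lip.dist_le_mul_infDist hKS hKne hKcpt hfK hq
      _ = Λ * u q := by rw [hu_dist q ⟨hq, hqK⟩]
      _ ≤ Λ * (2 * dist p q) := by gcongr; linarith
      _ = 2 * Λ * dist p q := by ring
  have hgS : LipschitzOnWith (2 * Λ) g S := LipschitzOnWith.of_dist_le_mul fun x hx y hy => by
    rw [hg_S x hx, hg_S y hy]
    exact (hf_lip.weaken (le_mul_of_one_le_left' one_le_two)).dist_le_mul x hx y hy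
  rw [← union_sdiff_self]
  refine hgS.union_of_eqOn_const (fun p hp => hg_one p hp.1 hp.2) fun p hp q hq => ?_
  rw [hg_S q hq]
  exact_mod_cast hcross p hp.1 q hq

theorem extension_by_one_lipschitz {Y : Type*} [MetricSpace Y]
    (S K O : Set Y) (hKS : K ⊆ S) (hKne : K.Nonempty) (hKcpt : IsCompact K)
    (hOS : O ⊆ S)
    (u : Y → ℝ) (hu_lip : LipschitzOnWith 1 u S)
    (hu_K : ∀ x ∈ S, (u x ≤ 0 ↔ x ∈ K))
    (hu_dist : ∀ x ∈ S \ K, u x = infDist x K)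
    (U : Y → ℝ) (hU : ∀ y, U y = ⨅ s : S, (u s + dist (s : Y) y))
    (γ : ℝ) (hγ : 0 < γ)
    (hsub : {x ∈ S | u x ≤ 3 * γ} ⊆ O)
    (Λ : NNReal) (f : Y → ℝ) (hf_lip : LipschitzOnWith Λ f S)
    (hf_range : ∀ x ∈ S, f x ∈ Icc (0 : ℝ) 1)
    (hf_O : ∀ x ∈ O, f x = 1)
    (g : Y → ℝ)
    (hg_S : ∀ x ∈ S, g x = f x)
    (hg_one : ∀ y, U y ≤ γ → y ∉ S → g y = 1) :
    LipschitzOnWith (2 * Λ) g (S ∪ {y | U y ≤ γ}) :=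
  extension_by_one_lipschitz_general S K O hKS hKne hKcpt u hu_lip hu_K hu_dist U hU γ hγ hsub Λ f
    hf_lip hf_O g hg_S hg_one
end
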